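/- arXiv:2402.14756 — 2 statements merged into one kernel-verified Lean document; each statement's English description precedes it below -/
import Mathlib

section
/- (Broad–narrow elementary lemma) Let K ≥ 2 and let (z_α)_{α∈𝒞_K} be complex numbers indexed by the K intervals of the partition 𝒞_K of [0,1] into intervals of length 1/K. Write α ∼ α′ if α and α′ are equal or adjacent. Then |∑_{α} z_α| ≤ 4 max_α |z_α| + K^{3/2} max_{α′ ≁ α″} |z_{α′} z_{α″}|^{1/2}. -/
open scoped NNReal
open Finset

/-!
Let `a` maximise `‖z a‖`. If some `b` not adjacent to `a` has `‖z b‖ ≥ ‖z a‖ / K`, then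
`‖z a‖ ≤ K^{1/2} (‖z a‖ ‖z b‖)^{1/2}`, and the trivial bound `‖∑ z‖ ≤ K ‖z a‖` gives the broad
term. Otherwise the at most three neighbours of `a` contribute at most `3 ‖z a‖` and the
remaining terms, each below `‖z a‖ / K`, at most `‖z a‖`.
-/

lemma nnnorm_sum_le_card_mul {ι E : Type*} [SeminormedAddCommGroup E] (s : Finset ι)
    (z : ι → E) {c : ℝ≥0} (h : ∀ a ∈ s, ‖z a‖₊ ≤ c) : ‖∑ a ∈ s, z a‖₊ ≤ #s * c :=
  (nnnorm_sum_le s z).trans <| by simpa [nsmul_eq_mul] using sum_le_card_nsmul s _ c h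

namespace NNReal

lemma le_sqrt_mul_sqrt_of_le_mul {x y k : ℝ≥0} (h : x ≤ k * y) : x ≤ sqrt k * sqrt (x * y) := by
  rw [← sqrt_mul, le_sqrt_iff_sq_le]
  calc x ^ 2 = x * x := sq x
    _ ≤ k * y * x := mul_le_mul_left h x
    _ = k * (x * y) := by ring

lemma rpow_three_halves (k : ℝ≥0) : k ^ ((3 : ℝ) / 2) = k * sqrt k := by
  rw [show (3 : ℝ) / 2 = 1 + 1 / 2 by norm_num, rpow_add' (by norm_num), rpow_one, sqrt_eq_rpow]

end NNReal

lemma Fin.card_filter_val_le_add_one_le_three {K : ℕ} (a : Fin K) :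
    #(univ.filter fun b : Fin K => a.1 ≤ b.1 + 1 ∧ b.1 ≤ a.1 + 1) ≤ 3 := by
  have hmaps : ∀ b ∈ univ.filter fun b : Fin K => a.1 ≤ b.1 + 1 ∧ b.1 ≤ a.1 + 1,
      b.1 ∈ Icc (a.1 - 1) (a.1 + 1) := by
    intro b hb
    simp only [mem_filter, mem_univ, true_and] at hb
    simp only [mem_Icc]
    omega
  have hIcc : #(Icc (a.1 - 1) (a.1 + 1)) ≤ 3 := by rw [Nat.card_Icc]; omega
  exact (card_le_card_of_injOn Fin.val hmaps Fin.val_injective.injOn).trans hIcc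

section BroadNarrow

variable {ι E : Type*} [Fintype ι] [SeminormedAddCommGroup E] (r : ι → ι → Prop)
  [DecidableRel r]

noncomputable def broadPart (z : ι → E) : ℝ≥0 :=
  univ.sup fun ab : ι × ι => if r ab.1 ab.2 then 0 else (‖z ab.1‖₊ * ‖z ab.2‖₊) ^ ((1 : ℝ) / 2)

variable {r}

lemma rpow_half_le_broadPart (z : ι → E) {a b : ι} (hab : ¬ r a b) :
    (‖z a‖₊ * ‖z b‖₊) ^ ((1 : ℝ) / 2) ≤ broadPart r z := by
  have h := le_sup (f := fun ab : ι × ι =>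
    if r ab.1 ab.2 then 0 else (‖z ab.1‖₊ * ‖z ab.2‖₊) ^ ((1 : ℝ) / 2)) (mem_univ (a, b))
  rwa [if_neg hab] at h

lemma nnnorm_sum_le_broadPart {z : ι → E} {a b : ι} (hmax : ∀ c, ‖z c‖₊ ≤ ‖z a‖₊)
    (hab : ¬ r a b) (hb : ‖z a‖₊ ≤ Fintype.card ι * ‖z b‖₊) :
    ‖∑ c, z c‖₊ ≤ (Fintype.card ι : ℝ≥0) ^ ((3 : ℝ) / 2) * broadPart r z := by
  set K : ℝ≥0 := (Fintype.card ι : ℝ≥0)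
  have hgeom : NNReal.sqrt (‖z a‖₊ * ‖z b‖₊) ≤ broadPart r z := by
    rw [NNReal.sqrt_eq_rpow]
    exact rpow_half_le_broadPart z hab
  calc ‖∑ c, z c‖₊ ≤ K * ‖z a‖₊ := by simpa using nnnorm_sum_le_card_mul univ z fun c _ => hmax c
    _ ≤ K * (NNReal.sqrt K * NNReal.sqrt (‖z a‖₊ * ‖z b‖₊)) := by
      gcongr
      exact NNReal.le_sqrt_mul_sqrt_of_le_mul hb
    _ ≤ K * (NNReal.sqrt K * broadPart r z) := by gcongr
    _ = K ^ ((3 : ℝ) / 2) * broadPart r z := by rw [NNReal.rpow_three_halves, mul_assoc]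

lemma nnnorm_sum_le_of_narrow {z : ι → E} {a : ι} {m : ℕ} (hm : #(univ.filter (r a)) ≤ m)
    (hmax : ∀ c, ‖z c‖₊ ≤ ‖z a‖₊)
    (hsmall : ∀ b, ¬ r a b → Fintype.card ι * ‖z b‖₊ ≤ ‖z a‖₊) :
    ‖∑ c, z c‖₊ ≤ (m + 1) * ‖z a‖₊ := by
  set K : ℝ≥0 := (Fintype.card ι : ℝ≥0)
  have hK : K ≠ 0 := Nat.cast_ne_zero.mpr ((Fintype.card_pos_iff.mpr ⟨a⟩).ne')
  have hnear : ‖∑ c ∈ univ.filter (r a), z c‖₊ ≤ m * ‖z a‖₊ :=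
    (nnnorm_sum_le_card_mul _ z fun c _ => hmax c).trans (by gcongr)
  have hfar : ‖∑ c ∈ univ.filter (¬ r a ·), z c‖₊ ≤ ‖z a‖₊ := by
    have hterm : ∀ b ∈ univ.filter (¬ r a ·), ‖z b‖₊ ≤ ‖z a‖₊ / K := by
      intro b hb
      rw [le_div_iff₀ hK.bot_lt, mul_comm]
      exact hsmall b (mem_filter.mp hb).2
    calc ‖∑ c ∈ univ.filter (¬ r a ·), z c‖₊ ≤ #(univ.filter (¬ r a ·)) * (‖z a‖₊ / K) :=
          nnnorm_sum_le_card_mul _ z hterm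
      _ ≤ K * (‖z a‖₊ / K) := by gcongr; exact Nat.cast_le.mpr (card_le_univ _)
      _ = ‖z a‖₊ := mul_div_cancel₀ _ hK
  rw [← sum_filter_add_sum_filter_not univ (r a)]
  calc _ ≤ _ := nnnorm_add_le _ _
    _ ≤ m * ‖z a‖₊ + ‖z a‖₊ := add_le_add hnear hfar
    _ = (m + 1) * ‖z a‖₊ := by ring

variable (r) in
theorem nnnorm_sum_le_broad_narrow (m : ℕ) (hr : ∀ a, #(univ.filter (r a)) ≤ m) (z : ι → E) :
    ‖∑ a, z a‖₊ ≤ (m + 1) * univ.sup (fun a => ‖z a‖₊) +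
      (Fintype.card ι : ℝ≥0) ^ ((3 : ℝ) / 2) * broadPart r z := by
  cases isEmpty_or_nonempty ι
  · simp
  obtain ⟨a, -, ha⟩ := exists_mem_eq_sup univ univ_nonempty fun a => ‖z a‖₊
  have hmax : ∀ c, ‖z c‖₊ ≤ ‖z a‖₊ := fun c => ha ▸ le_sup (f := fun a => ‖z a‖₊) (mem_univ c)
  rw [ha]
  by_cases hbroad : ∃ b, ¬ r a b ∧ ‖z a‖₊ ≤ Fintype.card ι * ‖z b‖₊
  · obtain ⟨b, hab, hb⟩ := hbroad
    exact (nnnorm_sum_le_broadPart hmax hab hb).trans le_add_self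
  · push Not at hbroad
    exact (nnnorm_sum_le_of_narrow (hr a) hmax fun b hb => (hbroad b hb).le).trans le_self_add

end BroadNarrow

theorem statement6_general (K : ℕ) (z : Fin K → ℂ) :
    ‖∑ a, z a‖₊ ≤
      4 * Finset.univ.sup (fun a => ‖z a‖₊) +
        (K : ℝ≥0) ^ ((3 : ℝ) / 2) *
          Finset.univ.sup (fun ab : Fin K × Fin K =>
            if ab.1.1 ≤ ab.2.1 + 1 ∧ ab.2.1 ≤ ab.1.1 + 1 then 0
            else (‖z ab.1‖₊ * ‖z ab.2‖₊) ^ ((1 : ℝ) / 2)) := by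
  have h := nnnorm_sum_le_broad_narrow (fun a b : Fin K => a.1 ≤ b.1 + 1 ∧ b.1 ≤ a.1 + 1) 3
    Fin.card_filter_val_le_add_one_le_three z
  rw [Fintype.card_fin] at h
  norm_num at h ⊢
  exact h

/-- **Broad–narrow elementary lemma.** Index the `K` intervals of the
partition of `[0,1]` into intervals of length `1/K` by `Fin K`; two intervals are
neighbors iff their indices differ by at most `1`.  Then for any complex numbers
`z a`, `|∑ z a| ≤ 4 max |z a| + K^{3/2} max_{a ≁ b} |z a * z b|^{1/2}`. -/
theorem statement6 (K : ℕ) (hK : 2 ≤ K) (z : Fin K → ℂ) :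
    ‖∑ a, z a‖₊ ≤
      4 * Finset.univ.sup (fun a => ‖z a‖₊) +
        (K : ℝ≥0) ^ ((3 : ℝ) / 2) *
          Finset.univ.sup (fun ab : Fin K × Fin K =>
            if ab.1.1 ≤ ab.2.1 + 1 ∧ ab.2.1 ≤ ab.1.1 + 1 then 0
            else (‖z ab.1‖₊ * ‖z ab.2‖₊) ^ ((1 : ℝ) / 2)) :=
  statement6_general K z
end

section
/- (Bootstrapping inequality forces trivial exponent) Suppose (D(n))_{n≥0} is a sequence of positive reals with D(n) ≤ 2^{n/2} for all n, and suppose there exist constants C_s (for each integer s ≥ 1) such that for all n: D(n) ≤ C_s · 2^{n/2^{s-1}} · 2^{nA(1 − (s+2)/2^{s+1})} whenever A > 0 satisfies D(m) ≤ C·2^{mA} for all m (with the same C absorbed into C_s). Then the infimum A₀ of all A > 0 for which D(n) ≲ 2^{nA} holds for all n must equal 0. -/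
/-!
Let `A₀` be the infimum of the admissible exponents. The bootstrap step maps every admissible
exponent `A` to the admissible exponent `2^{1-s} + A (1 - θₛ)` with `θₛ = (s+2)/2^{s+1}`; this
affine map is monotone and continuous, so it also maps `A₀` to a number `≥ A₀`. That gives
`θₛ A₀ ≤ 2^{1-s}`, i.e. `(s+2) A₀ ≤ 4`, for every `s ≥ 1`, which forces `A₀ = 0`.
-/

open Set

theorem csInf_le_apply_csInf {α : Type*} [ConditionallyCompleteLinearOrder α] [TopologicalSpace α]
    [OrderTopology α] {S : Set α} {f : α → α} (hne : S.Nonempty) (hbdd : BddBelow S)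
    (hf : Monotone f) (hcont : ContinuousAt f (sInf S)) (hmaps : MapsTo f S S) :
    sInf S ≤ f (sInf S) := by
  rw [hf.map_csInf_of_continuousAt hcont hne hbdd]
  exact csInf_le_csInf hbdd (hne.image f) hmaps.image_subset

theorem mul_csInf_le_of_mapsTo_affine {S : Set ℝ} {a θ : ℝ} (hne : S.Nonempty)
    (hbdd : BddBelow S) (hθ : θ ≤ 1) (hmaps : MapsTo (fun A ↦ a + A * (1 - θ)) S S) :
    θ * sInf S ≤ a := by
  have hmono : Monotone fun A : ℝ ↦ a + A * (1 - θ) :=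
    fun _ _ h ↦ add_le_add_right (mul_le_mul_of_nonneg_right h (sub_nonneg.2 hθ)) a
  have hfix := csInf_le_apply_csInf hne hbdd hmono (by fun_prop) hmaps
  linarith

def admissibleExponents (D : ℕ → ℝ) : Set ℝ :=
  {A : ℝ | 0 < A ∧ ∃ C : ℝ, 0 < C ∧ ∀ n : ℕ, D n ≤ C * 2 ^ ((n : ℝ) * A)}

theorem bddBelow_admissibleExponents (D : ℕ → ℝ) : BddBelow (admissibleExponents D) :=
  ⟨0, fun _ hA ↦ hA.1.le⟩

theorem half_mem_admissibleExponents {D : ℕ → ℝ} (htriv : ∀ n : ℕ, D n ≤ 2 ^ ((n : ℝ) / 2)) :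
    1 / 2 ∈ admissibleExponents D :=
  ⟨by norm_num, 1, one_pos, fun n ↦ by simpa [div_eq_mul_inv] using htriv n⟩

theorem inv_add_mul_mem_admissibleExponents {D : ℕ → ℝ} {b θ A : ℝ} (hb : 0 < b) (hθ : θ ≤ 1)
    (hA : 0 < A) (hbound : ∃ Cs : ℝ, 0 < Cs ∧ ∀ n : ℕ,
      D n ≤ Cs * 2 ^ ((n : ℝ) / b) * 2 ^ ((n : ℝ) * A * (1 - θ))) :
    b⁻¹ + A * (1 - θ) ∈ admissibleExponents D := by
  obtain ⟨Cs, hCs, hD⟩ := hbound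
  refine ⟨by nlinarith [inv_pos.2 hb], Cs, hCs, fun n ↦ ?_⟩
  calc D n ≤ Cs * 2 ^ ((n : ℝ) / b) * 2 ^ ((n : ℝ) * A * (1 - θ)) := hD n
    _ = Cs * 2 ^ ((n : ℝ) * (b⁻¹ + A * (1 - θ))) := by
      rw [mul_assoc, ← Real.rpow_add two_pos]
      ring_nf

theorem natCast_add_two_le_two_rpow (s : ℕ) : (s : ℝ) + 2 ≤ 2 ^ ((s : ℝ) + 1) := by
  rw [← Nat.cast_ofNat, ← Nat.cast_add_one, Real.rpow_natCast]
  exact_mod_cast Nat.lt_two_pow_self (n := s + 1)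

theorem add_two_mul_le_four_of_le {s x : ℝ}
    (h : (s + 2) / 2 ^ (s + 1) * x ≤ (2 ^ (s - 1))⁻¹) : (s + 2) * x ≤ 4 := by
  have hq : (0 : ℝ) < 2 ^ (s - 1) := by positivity
  have hsplit : (2 : ℝ) ^ (s + 1) = 2 ^ (s - 1) * 4 := by
    rw [show s + 1 = (s - 1) + 2 by ring, Real.rpow_add two_pos]
    norm_num
  rw [hsplit, div_mul_eq_mul_div, div_le_iff₀ (by positivity), inv_mul_eq_div,
    mul_div_cancel_left₀ _ hq.ne'] at h
  exact h

theorem eq_zero_of_forall_add_two_mul_le_four {x : ℝ} (hx : 0 ≤ x)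
    (h : ∀ s : ℕ, 1 ≤ s → ((s : ℝ) + 2) * x ≤ 4) : x = 0 := by
  by_contra hne
  have hpos : 0 < x := hx.lt_of_ne (Ne.symm hne)
  obtain ⟨s, hs⟩ := exists_nat_gt (4 / x)
  have := h (s + 1) (by omega)
  rw [div_lt_iff₀ hpos] at hs
  push_cast at this
  nlinarith

theorem statement17_general (D : ℕ → ℝ)
    (htriv : ∀ n : ℕ, D n ≤ 2 ^ ((n : ℝ) / 2))
    (hboot : ∀ s : ℕ, 1 ≤ s → ∀ A : ℝ, 0 < A → ∀ C : ℝ, 0 < C →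
      (∀ m : ℕ, D m ≤ C * 2 ^ ((m : ℝ) * A)) →
      ∃ Cs : ℝ, 0 < Cs ∧ ∀ n : ℕ,
        D n ≤ Cs * 2 ^ ((n : ℝ) / 2 ^ ((s : ℝ) - 1)) *
          2 ^ ((n : ℝ) * A * (1 - ((s : ℝ) + 2) / 2 ^ ((s : ℝ) + 1)))) :
    sInf {A : ℝ | 0 < A ∧ ∃ C : ℝ, 0 < C ∧ ∀ n : ℕ, D n ≤ C * 2 ^ ((n : ℝ) * A)} = 0 := by
  change sInf (admissibleExponents D) = 0
  have hne : (admissibleExponents D).Nonempty := ⟨_, half_mem_admissibleExponents htriv⟩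
  have hθ (s : ℕ) : ((s : ℝ) + 2) / 2 ^ ((s : ℝ) + 1) ≤ 1 :=
    (div_le_one (by positivity)).2 (natCast_add_two_le_two_rpow s)
  refine eq_zero_of_forall_add_two_mul_le_four
    (le_csInf hne fun _ hA ↦ hA.1.le) fun s hs ↦ add_two_mul_le_four_of_le ?_
  refine mul_csInf_le_of_mapsTo_affine hne (bddBelow_admissibleExponents D) (hθ s) ?_
  rintro A ⟨hA, C, hC, hDC⟩
  exact inv_add_mul_mem_admissibleExponents (by positivity) (hθ s) hA (hboot s hs A hA C hC hDC)

/-- **Bootstrapping inequality forces trivial exponent.** Suppose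
`D : ℕ → ℝ` is positive with `D n ≤ 2^{n/2}`, and suppose that for every `s ≥ 1`,
whenever `A > 0` satisfies `D m ≤ C · 2^{m A}` for all `m` (for some `C > 0`), there
is a constant `Cₛ` with
`D n ≤ Cₛ · 2^{n/2^{s−1}} · 2^{n A (1 − (s+2)/2^{s+1})}` for all `n`.  Then the
infimum of all `A > 0` for which `D n ≲ 2^{n A}` holds is `0`. -/
theorem statement17 (D : ℕ → ℝ) (hpos : ∀ n, 0 < D n)
    (htriv : ∀ n : ℕ, D n ≤ 2 ^ ((n : ℝ) / 2))
    (hboot : ∀ s : ℕ, 1 ≤ s → ∀ A : ℝ, 0 < A → ∀ C : ℝ, 0 < C →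
      (∀ m : ℕ, D m ≤ C * 2 ^ ((m : ℝ) * A)) →
      ∃ Cs : ℝ, 0 < Cs ∧ ∀ n : ℕ,
        D n ≤ Cs * 2 ^ ((n : ℝ) / 2 ^ ((s : ℝ) - 1)) *
          2 ^ ((n : ℝ) * A * (1 - ((s : ℝ) + 2) / 2 ^ ((s : ℝ) + 1)))) :
    sInf {A : ℝ | 0 < A ∧ ∃ C : ℝ, 0 < C ∧ ∀ n : ℕ, D n ≤ C * 2 ^ ((n : ℝ) * A)} = 0 :=
  statement17_general D htriv hboot
end
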